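/- Let σ be an involution and |ψ⟩ a unit vector. With the alternative RBM parameters W = arctan(e^{2κ}) - π/4 and b = sπ/4 (s = sign(κ)), the success probability P_s = ⟨ψ|cos²(Wσ + bI)|ψ⟩ equals 1 - 1/(1 + e^{4sκ}) - tanh(2sκ)·α, where α = ⟨ψ|(I+σ)/2|ψ⟩. -/

import Mathlib

/-!
Because `σ² = 1`, every function of `Wσ + bI` is affine in `σ`. For `cos²` the coefficient of `I`
is `cos² b cos² W + sin² b sin² W = 1/2`, as `b = ±π/4`, and the coefficient of `σ` is
`-sin 2b · sin 2W / 2 = -s tanh(2κ) / 2`, since `2W = 2 arctan(e^{2κ}) - π/2` is the Gudermannian of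
`2κ`, whose sine is `tanh(2κ)`. On the other side `1/(1 + e^{2y}) = (1 - tanh y)/2`, so both sides
equal `1/2 - tanh(2sκ) ⟨ψ|σ|ψ⟩ / 2`.
-/

open Matrix

/-- Alternative RBM weight `W(κ) = arctan(e^{2κ}) - π/4`. -/
noncomputable def Wparam2 (κ : ℝ) : ℝ := Real.arctan (Real.exp (2 * κ)) - Real.pi / 4

/-- Alternative RBM bias `b(κ) = sign(κ) π/4`. -/
noncomputable def bparam2 (κ : ℝ) : ℝ := Real.sign κ * (Real.pi / 4)

/-- `cos(Wσ + bI)` for an involution `σ`, via functional calculus: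
since `σ² = I`, `f(Wσ+bI) = ((f(b+W)+f(b-W))/2) I + ((f(b+W)-f(b-W))/2) σ`. -/
noncomputable def opCos {d : ℕ} (W b : ℝ) (σ : Matrix (Fin d) (Fin d) ℂ) :
    Matrix (Fin d) (Fin d) ℂ :=
  (((Real.cos (b + W) + Real.cos (b - W)) / 2 : ℝ) : ℂ) • (1 : Matrix (Fin d) (Fin d) ℂ) +
    (((Real.cos (b + W) - Real.cos (b - W)) / 2 : ℝ) : ℂ) • σ

open Real

theorem Real.tanh_eq_one_sub_two_div (x : ℝ) : tanh x = 1 - 2 / (1 + exp (2 * x)) := by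
  have hx : exp (2 * x) = exp x * exp x := by rw [two_mul, exp_add]
  rw [tanh_eq, exp_neg, hx]
  field_simp
  ring

theorem Real.tanh_sign_mul (r x : ℝ) : tanh (sign r * x) = sign r * tanh x := by
  rcases sign_apply_eq r with h | h | h <;> simp [h, tanh_neg]

theorem Real.sin_two_mul_arctan_exp_sub_pi_div_four (x : ℝ) :
    sin (2 * (arctan (exp x) - π / 4)) = tanh x := by
  rw [show 2 * (arctan (exp x) - π / 4) = 2 * arctan (exp x) - π / 2 by ring, sin_sub_pi_div_two,
    cos_two_mul, cos_sq_arctan, ← exp_nat_mul, tanh_eq_one_sub_two_div]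
  push_cast
  ring

namespace Matrix

variable {n R : Type*} [Fintype n] [DecidableEq n] [CommRing R]

theorem smul_one_add_smul_mul_self {σ : Matrix n n R} (hσ : σ * σ = 1) (a b : R) :
    (a • 1 + b • σ) * (a • 1 + b • σ) = (a ^ 2 + b ^ 2) • (1 : Matrix n n R) + (2 * a * b) • σ := by
  simp only [mul_add, add_mul, smul_mul_smul_comm, one_mul, mul_one, hσ]
  module

theorem dotProduct_smul_one_add_smul_mulVec (σ : Matrix n n R) {v w : n → R} (hvw : v ⬝ᵥ w = 1)
    (a b : R) : v ⬝ᵥ ((a • 1 + b • σ) *ᵥ w) = a + b * (v ⬝ᵥ σ *ᵥ w) := by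
  simp [add_mulVec, smul_mulVec, dotProduct_add, dotProduct_smul, hvw]

end Matrix

theorem opCos_mul_self {d : ℕ} (W b : ℝ) {σ : Matrix (Fin d) (Fin d) ℂ} (hσ : σ * σ = 1) :
    opCos W b σ * opCos W b σ =
      ((cos b ^ 2 * cos W ^ 2 + sin b ^ 2 * sin W ^ 2 : ℝ) : ℂ) • 1 +
        ((-(sin (2 * b) * sin (2 * W)) / 2 : ℝ) : ℂ) • σ := by
  rw [opCos, Matrix.smul_one_add_smul_mul_self hσ, cos_add, cos_sub, sin_two_mul, sin_two_mul]
  congr 2 <;> push_cast <;> ring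

theorem sin_two_mul_Wparam2 (κ : ℝ) : sin (2 * Wparam2 κ) = tanh (2 * κ) :=
  sin_two_mul_arctan_exp_sub_pi_div_four _

theorem sin_two_mul_bparam2 (κ : ℝ) : sin (2 * bparam2 κ) = sign κ := by
  rcases sign_apply_eq κ with h | h | h <;> simp [bparam2, h, show 2 * (π / 4) = π / 2 by ring]

theorem cos_sq_bparam2 {κ : ℝ} (hκ : κ ≠ 0) : cos (bparam2 κ) ^ 2 = 1 / 2 := by
  rcases sign_apply_eq_of_ne_zero κ hκ with h | h <;> norm_num [bparam2, h, cos_pi_div_four, div_pow]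

theorem sin_sq_bparam2 {κ : ℝ} (hκ : κ ≠ 0) : sin (bparam2 κ) ^ 2 = 1 / 2 := by
  rw [sin_sq, cos_sq_bparam2 hκ]; norm_num

theorem rbm_success_probability_alt_general {d : ℕ} (κ : ℝ) (hκ : κ ≠ 0)
    (σ : Matrix (Fin d) (Fin d) ℂ) (hinv : σ * σ = 1)
    (ψ : Fin d → ℂ) (hψ : star ψ ⬝ᵥ ψ = 1) :
    star ψ ⬝ᵥ ((opCos (Wparam2 κ) (bparam2 κ) σ * opCos (Wparam2 κ) (bparam2 κ) σ) *ᵥ ψ) =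
      1 - ((1 / (1 + Real.exp (4 * Real.sign κ * κ)) : ℝ) : ℂ) -
        ((Real.tanh (2 * Real.sign κ * κ) : ℝ) : ℂ) *
          (star ψ ⬝ᵥ (((2 : ℂ)⁻¹ • ((1 : Matrix (Fin d) (Fin d) ℂ) + σ)) *ᵥ ψ)) := by
  have hdiag : cos (bparam2 κ) ^ 2 * cos (Wparam2 κ) ^ 2 + sin (bparam2 κ) ^ 2 * sin (Wparam2 κ) ^ 2
      = 1 - 1 / (1 + exp (4 * sign κ * κ)) - tanh (2 * sign κ * κ) / 2 := by
    rw [cos_sq_bparam2 hκ, sin_sq_bparam2 hκ, tanh_eq_one_sub_two_div (2 * sign κ * κ),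
      show 2 * (2 * sign κ * κ) = 4 * sign κ * κ by ring]
    linear_combination (1 / 2 : ℝ) * sin_sq_add_cos_sq (Wparam2 κ)
  have hoff : -(sin (2 * bparam2 κ) * sin (2 * Wparam2 κ)) / 2 = -(tanh (2 * sign κ * κ) / 2) := by
    rw [sin_two_mul_bparam2, sin_two_mul_Wparam2, show 2 * sign κ * κ = sign κ * (2 * κ) by ring,
      tanh_sign_mul]
    ring
  rw [opCos_mul_self _ _ hinv, smul_add, Matrix.dotProduct_smul_one_add_smul_mulVec σ hψ,
    Matrix.dotProduct_smul_one_add_smul_mulVec σ hψ, hdiag, hoff]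
  push_cast
  ring

/-- With the alternative parameters, `P_s = ⟨ψ|cos²(Wσ+bI)|ψ⟩
= 1 - 1/(1+e^{4sκ}) - tanh(2sκ) α`, where `α = ⟨ψ|(I+σ)/2|ψ⟩`. -/
theorem rbm_success_probability_alt {d : ℕ} (κ : ℝ) (hκ : κ ≠ 0)
    (σ : Matrix (Fin d) (Fin d) ℂ) (hherm : σ.IsHermitian) (hinv : σ * σ = 1)
    (ψ : Fin d → ℂ) (hψ : star ψ ⬝ᵥ ψ = 1) :
    star ψ ⬝ᵥ ((opCos (Wparam2 κ) (bparam2 κ) σ * opCos (Wparam2 κ) (bparam2 κ) σ) *ᵥ ψ) =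
      1 - ((1 / (1 + Real.exp (4 * Real.sign κ * κ)) : ℝ) : ℂ) -
        ((Real.tanh (2 * Real.sign κ * κ) : ℝ) : ℂ) *
          (star ψ ⬝ᵥ (((2 : ℂ)⁻¹ • ((1 : Matrix (Fin d) (Fin d) ℂ) + σ)) *ᵥ ψ)) :=
  rbm_success_probability_alt_general κ hκ σ hinv ψ hψ
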